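/- arXiv:0710.4596 — 2 statements merged into one kernel-verified Lean document; each statement's English description precedes it below -/
import Mathlib

section
/- The flat triangles cover the hyperplane: H = {v ∈ ℝ³ : v₁+v₂+v₃ = 0} equals the union, over all a ∈ ℤ³ and all distinct i,j ∈ {1,2,3}, of the projected triangles π(T(a;i,j)). -/
noncomputable section

/-- Ambient space ℝ³. -/
abbrev E3 := EuclideanSpace ℝ (Fin 3)

/-- Standard basis vector eᵢ of ℝ³. -/
def ee3 (i : Fin 3) : E3 := EuclideanSpace.single i 1

/-- 𝟙 = e₁ + e₂ + e₃. -/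
def ones3 : E3 := ∑ i, ee3 i

/-- Orthogonal projection π onto the hyperplane H = {v ∈ ℝ³ : v₁+v₂+v₃ = 0},
    given by π(v) = v − ((v₁+v₂+v₃)/3)·𝟙. -/
def proj3 (v : E3) : E3 := v - ((∑ i, v i) / 3) • ones3

/-- A lattice point of ℤ³ viewed in ℝ³. -/
def toE3 (a : Fin 3 → ℤ) : E3 := WithLp.toLp 2 (fun n => (a n : ℝ))

/-- Slant triangle T(a;i,j) = conv{a, a+eᵢ, a+eᵢ+eⱼ}. -/
def slant3 (a : Fin 3 → ℤ) (i j : Fin 3) : Set E3 :=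
  convexHull ℝ {toE3 a, toE3 a + ee3 i, toE3 a + ee3 i + ee3 j}

/-- Flat triangle: the image π(T(a;i,j)). -/
def flat3 (a : Fin 3 → ℤ) (i j : Fin 3) : Set E3 := proj3 '' slant3 a i j

/-!
π is constant on the lines `v + ℝ𝟙` and fixes `H`, so `v ∈ H` is the image of the point `w` of
`v + ℝ𝟙` with `w₁ = 0`. That point lies in the lattice unit square
`⌊w⌋ + [0,1]e₂ + [0,1]e₃`, whose diagonal cuts it into the slant triangles `T(⌊w⌋;2,3)` and
`T(⌊w⌋;3,2)`.
-/

lemma ones3_apply (n : Fin 3) : ones3 n = 1 := by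
  fin_cases n <;> simp [ones3, ee3, Fin.sum_univ_three]

lemma sum_proj3 (v : E3) : ∑ n, proj3 v n = 0 := by
  simp only [proj3, PiLp.sub_apply, PiLp.smul_apply, ones3_apply, smul_eq_mul, mul_one,
    Finset.sum_sub_distrib, Finset.sum_const, Finset.card_univ, Fintype.card_fin, nsmul_eq_mul]
  ring

lemma sum_ones3 : ∑ n, ones3 n = 3 := by
  simp [ones3_apply]

lemma proj3_add_smul_ones3 (v : E3) (t : ℝ) : proj3 (v + t • ones3) = proj3 v := by
  simp only [proj3, PiLp.add_apply, PiLp.smul_apply, smul_eq_mul, Finset.sum_add_distrib,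
    ← Finset.mul_sum, sum_ones3]
  module

lemma proj3_of_sum_eq_zero {v : E3} (hv : ∑ n, v n = 0) : proj3 v = v := by
  simp [proj3, hv]

lemma mem_slant3 (a : Fin 3 → ℤ) (i j : Fin 3) {s u : ℝ} (hu : 0 ≤ u) (hus : u ≤ s)
    (hs : s ≤ 1) : toE3 a + s • ee3 i + u • ee3 j ∈ slant3 a i j := by
  have hmem := (convex_convexHull ℝ
      ({toE3 a, toE3 a + ee3 i, toE3 a + ee3 i + ee3 j} : Set E3)).sum_mem
    (t := Finset.univ) (w := ![1 - s, s - u, u])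
    (z := ![toE3 a, toE3 a + ee3 i, toE3 a + ee3 i + ee3 j])
    (by intro k _; fin_cases k <;> simp <;> linarith)
    (by simp [Fin.sum_univ_three])
    (by intro k _; fin_cases k <;> apply subset_convexHull <;> simp)
  rw [slant3]
  convert hmem using 1
  simp only [Fin.sum_univ_three, Matrix.cons_val_zero, Matrix.cons_val_one, Matrix.cons_val_two,
    Matrix.head_cons, Matrix.tail_cons]
  module

lemma mem_slant3_union_of_mem_Icc (a : Fin 3 → ℤ) (i j : Fin 3) {s u : ℝ}
    (hs : s ∈ Set.Icc (0 : ℝ) 1) (hu : u ∈ Set.Icc (0 : ℝ) 1) :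
    toE3 a + s • ee3 i + u • ee3 j ∈ slant3 a i j ∪ slant3 a j i := by
  rcases le_total u s with h | h
  · exact Or.inl (mem_slant3 a i j hu.1 h hs.2)
  · exact Or.inr (add_right_comm (toE3 a) _ _ ▸ mem_slant3 a j i hs.1 h hu.2)

lemma eq_toE3_floor_add_fract {w : E3} (hw : w 0 = 0) :
    w = toE3 (fun n => ⌊w n⌋) + Int.fract (w 1) • ee3 1 + Int.fract (w 2) • ee3 2 := by
  ext n
  fin_cases n <;> simp [toE3, ee3, ← Int.self_sub_floor, hw]

lemma exists_mem_slant3_of_apply_zero {w : E3} (hw : w 0 = 0) :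
    ∃ (a : Fin 3 → ℤ) (i j : Fin 3), i ≠ j ∧ w ∈ slant3 a i j := by
  have hfract (x : ℝ) : Int.fract x ∈ Set.Icc (0 : ℝ) 1 :=
    ⟨Int.fract_nonneg x, (Int.fract_lt_one x).le⟩
  rw [eq_toE3_floor_add_fract hw]
  rcases mem_slant3_union_of_mem_Icc _ 1 2 (hfract (w 1)) (hfract (w 2)) with h | h
  · exact ⟨_, 1, 2, by decide, h⟩
  · exact ⟨_, 2, 1, by decide, h⟩

/-- the flat triangles cover the hyperplane H. -/
theorem stmt3 :
    {v : E3 | ∑ n, v n = 0} =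
      ⋃ (a : Fin 3 → ℤ) (i : Fin 3) (j : Fin 3) (_ : i ≠ j), flat3 a i j := by
  ext v
  simp only [Set.mem_ofPred_eq, Set.mem_iUnion]
  constructor
  · intro hv
    have hproj : proj3 (v + (-v 0) • ones3) = v := by
      rw [proj3_add_smul_ones3, proj3_of_sum_eq_zero hv]
    have hzero : (v + (-v 0) • ones3) 0 = 0 := by simp [ones3_apply]
    obtain ⟨a, i, j, hij, hmem⟩ := exists_mem_slant3_of_apply_zero hzero
    exact ⟨a, i, j, hij, _, hmem, hproj⟩
  · rintro ⟨a, i, j, -, p, -, rfl⟩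
    exact sum_proj3 p
end
end

section
/- The flat triangles tile the hyperplane without overlap: if a,b ∈ ℤ³, i ≠ j, k ≠ l, and π(T(a;i,j)) ≠ π(T(b;k,l)) as sets, then the relative interiors of π(T(a;i,j)) and π(T(b;k,l)) (i.e. their interiors within the 2-dimensional hyperplane H) are disjoint. -/
noncomputable section

/-!
The coordinate differences `x p - x q` are invariant under `π`, and on `π(T(a;i,j))`, with `k`
the third index, they satisfy `a j - a k ≤ x j - x k`, `a i - a j ≤ x i - x j` and
`x i - x k ≤ a i - a k + 1`, strictly on the relative interior (each bound is attained at two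
vertices but not at the third). Hence a relative interior point `x` recovers `a` up to a multiple
of `𝟙` from `⌊x i - x k⌋` and `⌊x j - x k⌋`, while `x i - x j` separates `π(T(a;i,j))` from
`π(T(b;j,i))`. Since `e i + e j + e k = 𝟙` is killed by `π`, rotating `(i, j, k)` cyclically
does not change the flat triangle, so every flat triangle is some `π(T(c;0,1))` or `π(T(c;1,0))`.
-/

section IntrinsicInterior

variable {E : Type*} [AddCommGroup E] [TopologicalSpace E] [Module ℝ E]
  [ContinuousAdd E] [ContinuousSMul ℝ E]

theorem eventually_add_smul_mem_of_mem_intrinsicInterior {S : Set E} {x d : E}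
    (hx : x ∈ intrinsicInterior ℝ S) (hd : d ∈ (affineSpan ℝ S).direction) :
    ∀ᶠ t in nhds (0 : ℝ), x + t • d ∈ S := by
  obtain ⟨y, hy, rfl⟩ := hx
  let c : ℝ → affineSpan ℝ S := fun t =>
    ⟨(y : E) + t • d, by
      simpa [vadd_eq_add, add_comm] using
        AffineSubspace.vadd_mem_of_mem_direction (Submodule.smul_mem _ t hd) y.2⟩
  have hc : Continuous c := by fun_prop
  have hc0 : c 0 = y := Subtype.ext (by simp [c])
  rw [← hc0] at hy
  exact hc.continuousAt.preimage_mem_nhds (mem_interior_iff_mem_nhds.mp hy)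

theorem lt_apply_of_mem_intrinsicInterior {S : Set E} {x y : E} {φ : E →ₗ[ℝ] ℝ} {c : ℝ}
    (hS : ∀ z ∈ S, c ≤ φ z) (hy : y ∈ S) (hcy : c < φ y)
    (hx : x ∈ intrinsicInterior ℝ S) : c < φ x := by
  have hd : x - y ∈ (affineSpan ℝ S).direction :=
    AffineSubspace.vsub_mem_direction (subset_affineSpan ℝ S (intrinsicInterior_subset hx))
      (subset_affineSpan ℝ S hy)
  obtain ⟨t, hxt, ht⟩ := ((eventually_add_smul_mem_of_mem_intrinsicInterior hx hd).filter_mono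
    nhdsWithin_le_nhds |>.and (self_mem_nhdsWithin (s := Set.Ioi 0))).exists
  have := hS _ hxt
  simp only [map_add, map_smul, map_sub, smul_eq_mul] at this
  nlinarith

end IntrinsicInterior

section FlatTriangles

def coordDiff (p q : Fin 3) : E3 →ₗ[ℝ] ℝ :=
  ((EuclideanSpace.proj p - EuclideanSpace.proj q : E3 →L[ℝ] ℝ) : E3 →ₗ[ℝ] ℝ)

@[simp]
theorem coordDiff_apply (p q : Fin 3) (x : E3) : coordDiff p q x = x p - x q := rfl

theorem isLinearMap_proj3 : IsLinearMap ℝ proj3 where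
  map_add x y := by simp only [proj3, PiLp.add_apply, Finset.sum_add_distrib]; module
  map_smul t x := by simp only [proj3, PiLp.smul_apply, smul_eq_mul, ← Finset.mul_sum]; module

theorem proj3_ones3 : proj3 ones3 = 0 := by
  ext p
  fin_cases p <;> simp [proj3, ones3, ee3, Fin.sum_univ_three] <;> norm_num

@[simp]
theorem coordDiff_proj3 (p q : Fin 3) (v : E3) : coordDiff p q (proj3 v) = coordDiff p q v := by
  simp [proj3, ones3, ee3]

theorem toE3_add (a b : Fin 3 → ℤ) : toE3 (a + b) = toE3 a + toE3 b := by
  ext p; simp [toE3]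

theorem toE3_single (i : Fin 3) : toE3 (Pi.single i 1) = ee3 i := by
  ext p; simp [toE3, ee3, Pi.single_apply]

theorem toE3_const (t : ℤ) : toE3 (fun _ => t) = (t : ℝ) • ones3 := by
  ext p; simp [toE3, ones3, ee3]

theorem ee3_add_ee3_add_ee3 {i j k : Fin 3} (hij : i ≠ j) (hjk : j ≠ k) (hik : i ≠ k) :
    ee3 i + ee3 j + ee3 k = ones3 := by
  fin_cases i <;> fin_cases j <;> fin_cases k <;>
    simp_all [ones3, Fin.sum_univ_three] <;> abel

theorem flat3_eq_convexHull (a : Fin 3 → ℤ) (i j : Fin 3) : flat3 a i j =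
    convexHull ℝ {proj3 (toE3 a), proj3 (toE3 a + ee3 i), proj3 (toE3 a + ee3 i + ee3 j)} := by
  rw [flat3, slant3, isLinearMap_proj3.image_convexHull, Set.image_insert_eq,
    Set.image_insert_eq, Set.image_singleton]

theorem flat3_rotate (a : Fin 3 → ℤ) {i j k : Fin 3} (hij : i ≠ j) (hjk : j ≠ k) (hik : i ≠ k) :
    flat3 a i j = flat3 (a + Pi.single i 1) j k := by
  have hcycle : proj3 (toE3 a + ee3 i + ee3 j + ee3 k) = proj3 (toE3 a) := by
    rw [add_assoc, add_assoc, ← add_assoc (ee3 i), ee3_add_ee3_add_ee3 hij hjk hik,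
      isLinearMap_proj3.map_add, proj3_ones3, add_zero]
  rw [flat3_eq_convexHull, flat3_eq_convexHull, toE3_add, toE3_single, hcycle]
  congr 1
  ext; simp only [Set.mem_insert_iff, Set.mem_singleton_iff]; tauto

theorem flat3_add_const (a : Fin 3 → ℤ) (t : ℤ) (i j : Fin 3) :
    flat3 (a + fun _ => t) i j = flat3 a i j := by
  have hshift (v : E3) : proj3 (toE3 (a + fun _ => t) + v) = proj3 (toE3 a + v) := by
    rw [toE3_add, toE3_const, add_right_comm, isLinearMap_proj3.map_add (_ + v),
      isLinearMap_proj3.map_smul, proj3_ones3, smul_zero, add_zero]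
  rw [flat3_eq_convexHull, flat3_eq_convexHull, add_assoc, add_assoc, hshift, hshift,
    ← add_zero (toE3 (a + _)), hshift, add_zero]

theorem exists_flat3_eq_or_eq (a : Fin 3 → ℤ) {i j : Fin 3} (hij : i ≠ j) :
    ∃ c, flat3 a i j = flat3 c 0 1 ∨ flat3 a i j = flat3 c 1 0 := by
  fin_cases i <;> fin_cases j <;> simp only [ne_eq, not_true_eq_false] at hij
  · exact ⟨a, .inl rfl⟩
  · exact ⟨_, .inr ((flat3_rotate (k := 1) a (by decide) (by decide) (by decide)).trans
      (flat3_rotate (k := 0) _ (by decide) (by decide) (by decide)))⟩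
  · exact ⟨a, .inr rfl⟩
  · exact ⟨_, .inl ((flat3_rotate (k := 0) a (by decide) (by decide) (by decide)).trans
      (flat3_rotate (k := 1) _ (by decide) (by decide) (by decide)))⟩
  · exact ⟨_, .inl (flat3_rotate (k := 1) a (by decide) (by decide) (by decide))⟩
  · exact ⟨_, .inr (flat3_rotate (k := 0) a (by decide) (by decide) (by decide))⟩

theorem le_coordDiff_of_mem_flat3 {a : Fin 3 → ℤ} {i j p q : Fin 3} {c : ℝ}
    (h₀ : c ≤ coordDiff p q (toE3 a)) (h₁ : c ≤ coordDiff p q (toE3 a + ee3 i))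
    (h₂ : c ≤ coordDiff p q (toE3 a + ee3 i + ee3 j)) :
    ∀ z ∈ flat3 a i j, c ≤ coordDiff p q z := by
  rintro _ ⟨v, hv, rfl⟩
  rw [coordDiff_proj3]
  refine convexHull_min ?_ (convex_halfSpace_ge (coordDiff p q).isLinear c) hv
  simp only [Set.insert_subset_iff, Set.singleton_subset_iff]
  exact ⟨h₀, h₁, h₂⟩

theorem proj3_mem_flat3 {a : Fin 3 → ℤ} {i j : Fin 3} {v : E3}
    (hv : v ∈ ({toE3 a, toE3 a + ee3 i, toE3 a + ee3 i + ee3 j} : Set E3)) :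
    proj3 v ∈ flat3 a i j :=
  Set.mem_image_of_mem _ (subset_convexHull ℝ _ hv)

end FlatTriangles

section RelativeInterior

variable {a : Fin 3 → ℤ} {i j k : Fin 3} {x : E3}

theorem lt_coordDiff_of_mem_intrinsicInterior_flat3 (hij : i ≠ j) (hjk : j ≠ k) (hik : i ≠ k)
    (hx : x ∈ intrinsicInterior ℝ (flat3 a i j)) :
    (a j - a k : ℝ) < x j - x k ∧ (a i - a j : ℝ) < x i - x j ∧ x i - x k < a i - a k + 1 := by
  refine ⟨?_, ?_, ?_⟩
  · exact lt_apply_of_mem_intrinsicInterior (φ := coordDiff j k)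
      (le_coordDiff_of_mem_flat3 (by simp [toE3]) (by simp [toE3, ee3, hij, hik])
        (by simp [toE3, ee3, hij, hjk, hik]))
      (proj3_mem_flat3 (v := toE3 a + ee3 i + ee3 j) (by simp))
      (by rw [coordDiff_proj3]; simp [toE3, ee3, hij.symm, hjk.symm, hik.symm]) hx
  · exact lt_apply_of_mem_intrinsicInterior (φ := coordDiff i j)
      (le_coordDiff_of_mem_flat3 (by simp [toE3]) (by simp [toE3, ee3, hij])
        (by simp [toE3, ee3, hij]))
      (proj3_mem_flat3 (v := toE3 a + ee3 i) (by simp))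
      (by rw [coordDiff_proj3]; simp [toE3, ee3, hij.symm]) hx
  · have := lt_apply_of_mem_intrinsicInterior (φ := coordDiff k i) (c := a k - a i - 1)
      (le_coordDiff_of_mem_flat3 (by simp [toE3]) (by simp [toE3, ee3, hik]; linarith)
        (by simp [toE3, ee3, hij, hjk, hik]; linarith))
      (proj3_mem_flat3 (v := toE3 a) (by simp)) (by rw [coordDiff_proj3]; simp [toE3]) hx
    simp only [coordDiff_apply] at this
    linarith

theorem floor_sub_eq_of_mem_intrinsicInterior_flat3 (hij : i ≠ j) (hjk : j ≠ k) (hik : i ≠ k)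
    (hx : x ∈ intrinsicInterior ℝ (flat3 a i j)) :
    ⌊x i - x k⌋ = a i - a k ∧ ⌊x j - x k⌋ = a j - a k := by
  obtain ⟨hjk', hij', hik'⟩ := lt_coordDiff_of_mem_intrinsicInterior_flat3 hij hjk hik hx
  constructor <;> rw [Int.floor_eq_iff] <;> push_cast <;> constructor <;> linarith

theorem disjoint_intrinsicInterior_flat3_of_ne {b : Fin 3 → ℤ} (hij : i ≠ j) (hjk : j ≠ k)
    (hik : i ≠ k) (hne : flat3 a i j ≠ flat3 b i j) :
    Disjoint (intrinsicInterior ℝ (flat3 a i j)) (intrinsicInterior ℝ (flat3 b i j)) := by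
  refine Set.disjoint_left.mpr fun x hxa hxb => hne ?_
  obtain ⟨hai, haj⟩ := floor_sub_eq_of_mem_intrinsicInterior_flat3 hij hjk hik hxa
  obtain ⟨hbi, hbj⟩ := floor_sub_eq_of_mem_intrinsicInterior_flat3 hij hjk hik hxb
  have hab : a = b + fun _ => a k - b k := by
    funext p
    have hp : p = i ∨ p = j ∨ p = k := by omega
    rcases hp with rfl | rfl | rfl <;> simp only [Pi.add_apply] <;> omega
  rw [hab, flat3_add_const]

theorem disjoint_intrinsicInterior_flat3_swap (b : Fin 3 → ℤ) (hij : i ≠ j) (hjk : j ≠ k)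
    (hik : i ≠ k) :
    Disjoint (intrinsicInterior ℝ (flat3 a i j)) (intrinsicInterior ℝ (flat3 b j i)) := by
  refine Set.disjoint_left.mpr fun x hxa hxb => ?_
  obtain ⟨hai, haj⟩ := floor_sub_eq_of_mem_intrinsicInterior_flat3 hij hjk hik hxa
  obtain ⟨hbj, hbi⟩ := floor_sub_eq_of_mem_intrinsicInterior_flat3 hij.symm hik hjk hxb
  have hdiff : (a i - a j : ℝ) = b i - b j := by exact_mod_cast (by omega : a i - a j = b i - b j)
  have ha := (lt_coordDiff_of_mem_intrinsicInterior_flat3 hij hjk hik hxa).2.1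
  have hb := (lt_coordDiff_of_mem_intrinsicInterior_flat3 hij.symm hik hjk hxb).2.1
  linarith

end RelativeInterior

/-- distinct flat triangles have disjoint relative interiors
(interiors within the 2-dimensional hyperplane H). -/
theorem stmt4 (a b : Fin 3 → ℤ) (i j k l : Fin 3)
    (hij : i ≠ j) (hkl : k ≠ l)
    (hne : flat3 a i j ≠ flat3 b k l) :
    Disjoint (intrinsicInterior ℝ (flat3 a i j)) (intrinsicInterior ℝ (flat3 b k l)) := by
  obtain ⟨a', ha | ha⟩ := exists_flat3_eq_or_eq a hij <;>
    obtain ⟨b', hb | hb⟩ := exists_flat3_eq_or_eq b hkl <;>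
    rw [ha, hb] at hne ⊢
  · exact disjoint_intrinsicInterior_flat3_of_ne (k := 2) (by decide) (by decide) (by decide) hne
  · exact disjoint_intrinsicInterior_flat3_swap (k := 2) b' (by decide) (by decide) (by decide)
  · exact (disjoint_intrinsicInterior_flat3_swap (k := 2) a' (by decide) (by decide)
      (by decide)).symm
  · exact disjoint_intrinsicInterior_flat3_of_ne (k := 2) (by decide) (by decide) (by decide) hne
end
end
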